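/- Let A be a cubic graph with v(A) ≡ 0 (mod 6), let a be a vertex of A with neighbor a₁, and suppose that A has no Λ-factor containing the edge e = aa₁. Let G = Y(A,a) be built from three disjoint copies of (A,a). Then v(G) ≡ 0 (mod 6) and G has no Λ-factor. -/
import Mathlib


open SimpleGraph

/-- `p` encodes a 3-vertex path (a `Λ`) in `G`: three distinct vertices, the first
adjacent to the second and the second adjacent to the third. -/
def IsPathL {V : Type*} (G : SimpleGraph V) (p : V × V × V) : Prop :=
  p.1 ≠ p.2.1 ∧ p.2.1 ≠ p.2.2 ∧ p.1 ≠ p.2.2 ∧ G.Adj p.1 p.2.1 ∧ G.Adj p.2.1 p.2.2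

/-- The vertex set of an encoded 3-vertex path. -/
def pVerts {V : Type*} (p : V × V × V) : Set V := {p.1, p.2.1, p.2.2}

/-- The edge set of an encoded 3-vertex path. -/
def pEdges {V : Type*} (p : V × V × V) : Set (Sym2 V) := {s(p.1, p.2.1), s(p.2.1, p.2.2)}

/-- A `Λ`-packing of `G`: a collection of pairwise vertex-disjoint 3-vertex paths of `G`. -/
def IsPacking {V : Type*} (G : SimpleGraph V) (P : Finset (V × V × V)) : Prop :=
  (∀ p ∈ P, IsPathL G p) ∧
  ∀ p ∈ P, ∀ q ∈ P, p ≠ q → Disjoint (pVerts p) (pVerts q)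

/-- A `Λ`-factor of the induced subgraph of `G` on the vertex set `S`:
a `Λ`-packing whose paths lie in `S` and together cover all of `S`. -/
def IsFactorOn {V : Type*} (G : SimpleGraph V) (S : Set V) (P : Finset (V × V × V)) : Prop :=
  IsPacking G P ∧ (∀ p ∈ P, pVerts p ⊆ S) ∧ ∀ v ∈ S, ∃ p ∈ P, v ∈ pVerts p

/-- A `Λ`-factor of `G`. -/
def IsFactor {V : Type*} (G : SimpleGraph V) (P : Finset (V × V × V)) : Prop :=
  IsFactorOn G Set.univ P

/-- The packing `P` contains the edge `e`. -/
def PContains {V : Type*} (P : Finset (V × V × V)) (e : Sym2 V) : Prop :=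
  ∃ p ∈ P, e ∈ pEdges p

/-- `λ(G)`: the maximum number of pairwise disjoint 3-vertex paths in `G`. -/
noncomputable def lambdaNum {V : Type*} (G : SimpleGraph V) [Fintype V] : ℕ :=
  sSup {n | ∃ P : Finset (V × V × V), IsPacking G P ∧ P.card = n}

/-- Every vertex of `G` has degree exactly 3. -/
def IsCubic {V : Type*} (G : SimpleGraph V) : Prop :=
  ∀ v, (G.neighborSet v).ncard = 3

/-- `G` is `k`-connected: more than `k` vertices, and deleting any set of fewer than
`k` vertices leaves a connected graph. -/
def KConnected {V : Type*} (k : ℕ) (G : SimpleGraph V) [Fintype V] : Prop :=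
  k < Fintype.card V ∧ ∀ S : Set V, S.ncard < k → (G.induce Sᶜ).Connected

/-- The graph `Y(A,a)` built from three disjoint copies of `(A,a)`: delete `a` (with
neighbors `a₁,a₂,a₃`) from each copy `i : Fin 3` of `A`, add three new vertices
`z₀,z₁,z₂` (the right `Fin 3` part), and join `z_j` to the copy of `a_{j+1}` in each
copy of `A`. -/
def YSame {V : Type*} (A : SimpleGraph V) (a : V) (a1 a2 a3 : V) :
    SimpleGraph ((Fin 3 × {x : V // x ≠ a}) ⊕ Fin 3) :=
  SimpleGraph.fromRel fun u v =>
    match u, v with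
    | Sum.inl (i, x), Sum.inl (i', y) => i = i' ∧ A.Adj x.1 y.1
    | Sum.inl (_, x), Sum.inr j =>
        (j = 0 ∧ x.1 = a1) ∨ (j = 1 ∧ x.1 = a2) ∨ (j = 2 ∧ x.1 = a3)
    | _, _ => False

namespace S11

def pFin {α : Type*} [DecidableEq α] (p : α × α × α) : Finset α := {p.1, p.2.1, p.2.2}

lemma mem_pFin {α : Type*} [DecidableEq α] (p : α × α × α) (w : α) :
    w ∈ pFin p ↔ w ∈ pVerts p := by simp [pFin, pVerts]

variable {V : Type*} [Fintype V] [DecidableEq V]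

lemma adj_ll (A : SimpleGraph V) (a a1 a2 a3 : V) (i i' : Fin 3) (x y : {x : V // x ≠ a}) :
    (YSame A a a1 a2 a3).Adj (Sum.inl (i, x)) (Sum.inl (i', y)) ↔ i = i' ∧ A.Adj x.1 y.1 := by
  constructor
  · rintro ⟨hne, h | h⟩
    · exact h
    · exact ⟨h.1.symm, h.2.symm⟩
  · rintro ⟨rfl, h⟩
    refine ⟨?_, Or.inl ⟨rfl, h⟩⟩
    simp only [ne_eq, Sum.inl.injEq, Prod.mk.injEq]
    rintro ⟨-, rfl⟩
    exact h.ne rfl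

lemma adj_lr (A : SimpleGraph V) (a a1 a2 a3 : V) (i : Fin 3) (x : {x : V // x ≠ a}) (j : Fin 3) :
    (YSame A a a1 a2 a3).Adj (Sum.inl (i, x)) (Sum.inr j) ↔ x.1 = ![a1,a2,a3] j := by
  constructor
  · rintro ⟨hne, h | h⟩
    · rcases h with ⟨rfl, h⟩ | ⟨rfl, h⟩ | ⟨rfl, h⟩ <;> simp [h]
    · exact absurd h id
  · intro h
    refine ⟨by simp, Or.inl ?_⟩
    fin_cases j <;> simp_all

lemma adj_rr (A : SimpleGraph V) (a a1 a2 a3 : V) (j k : Fin 3) :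
    ¬ (YSame A a a1 a2 a3).Adj (Sum.inr j) (Sum.inr k) := by
  rintro ⟨hne, h | h⟩ <;> exact h

def CFin (a : V) (i : Fin 3) : Finset ((Fin 3 × {x : V // x ≠ a}) ⊕ Fin 3) :=
  Finset.univ.image fun x => Sum.inl (i, x)

lemma mem_CFin (a : V) (i : Fin 3) (w : (Fin 3 × {x : V // x ≠ a}) ⊕ Fin 3) :
    w ∈ CFin a i ↔ ∃ x, w = Sum.inl (i, x) := by
  simp only [CFin, Finset.mem_image, Finset.mem_univ, true_and]
  exact ⟨fun ⟨x, h⟩ => ⟨x, h.symm⟩, fun ⟨x, h⟩ => ⟨x, h.symm⟩⟩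

@[simp] lemma inl_mem_CFin (a : V) (i i' : Fin 3) (x : {x : V // x ≠ a}) :
    Sum.inl (i', x) ∈ CFin a i ↔ i' = i := by
  rw [mem_CFin]
  constructor
  · rintro ⟨y, hy⟩; cases hy; rfl
  · rintro rfl; exact ⟨x, rfl⟩

@[simp] lemma inr_notMem_CFin (a : V) (i j : Fin 3) :
    (Sum.inr j : (Fin 3 × {x : V // x ≠ a}) ⊕ Fin 3) ∉ CFin a i := by
  simp [CFin]

lemma card_CFin (a : V) (i : Fin 3) : (CFin a i).card = Fintype.card V - 1 := by
  rw [CFin, Finset.card_image_of_injective _ (fun x y h => by cases h; rfl),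
    Finset.card_univ]
  simp [Fintype.card_subtype_compl]

lemma card_pFin {α : Type*} [DecidableEq α] (G : SimpleGraph α) (p : α × α × α)
    (h : IsPathL G p) : (pFin p).card = 3 := by
  obtain ⟨h1, h2, h3, -, -⟩ := h
  rw [Finset.card_eq_three]
  exact ⟨p.1, p.2.1, p.2.2, h1, h3, h2, rfl⟩

lemma perm3 {α : Type*} [DecidableEq α] (u v w : α) :
    ({u, v, w} : Finset α) = {w, v, u} := by
  ext x; simp; tauto

lemma perm3' {α : Type*} [DecidableEq α] (u v w : α) :
    ({u, v, w} : Finset α) = {v, u, w} := by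
  ext x; simp; tauto

lemma classify (A : SimpleGraph V) (a a1 a2 a3 : V)
    (h12 : a1 ≠ a2) (h13 : a1 ≠ a3) (h23 : a2 ≠ a3)
    (p : (((Fin 3 × {x : V // x ≠ a}) ⊕ Fin 3) × ((Fin 3 × {x : V // x ≠ a}) ⊕ Fin 3) ×
      ((Fin 3 × {x : V // x ≠ a}) ⊕ Fin 3)))
    (hp : IsPathL (YSame A a a1 a2 a3) p) (j : Fin 3)
    (hj : Sum.inr j ∈ pVerts p) :
    (∃ (i : Fin 3) (x y : {x : V // x ≠ a}), x.1 = ![a1,a2,a3] j ∧ A.Adj x.1 y.1 ∧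
       pFin p = {Sum.inr j, Sum.inl (i, x), Sum.inl (i, y)})
  ∨ (∃ (i i' : Fin 3) (x x' : {x : V // x ≠ a}), i ≠ i' ∧ x.1 = ![a1,a2,a3] j ∧
       x'.1 = ![a1,a2,a3] j ∧
       pFin p = {Sum.inr j, Sum.inl (i, x), Sum.inl (i', x')}) := by
  have hdist : ∀ j k : Fin 3, j ≠ k → ![a1,a2,a3] j ≠ ![a1,a2,a3] k := by
    intro j k hjk
    fin_cases j <;> fin_cases k <;>
      simp_all [Matrix.cons_val_zero, Matrix.cons_val_one, Matrix.head_cons] <;>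
      first
      | exact h12 | exact h13 | exact h23
      | exact h12.symm | exact h13.symm | exact h23.symm
      | exact fun h => h12 h.symm | exact fun h => h13 h.symm | exact fun h => h23 h.symm
  obtain ⟨d1, d2, d3, e1, e2⟩ := hp
  have hfin : pFin p = {p.1, p.2.1, p.2.2} := rfl
  simp only [pVerts, Set.mem_insert_iff, Set.mem_singleton_iff] at hj
  rcases hj with hj | hj | hj
  · -- p.1 = inr j
    rw [← hj] at e1
    rcases h21 : p.2.1 with ⟨i, x⟩ | k
    · rw [h21] at e1 e2
      have hx : x.1 = ![a1,a2,a3] j := (adj_lr A a a1 a2 a3 i x j).mp e1.symm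
      rcases h22 : p.2.2 with ⟨⟨i', y⟩⟩ | k
      · rw [h22] at e2
        obtain ⟨rfl, hadj⟩ := (adj_ll A a a1 a2 a3 i i' x y).mp e2
        exact Or.inl ⟨i, x, y, hx, hadj, by rw [hfin, ← hj, h21, h22]⟩
      · exfalso
        rw [h22] at e2 d3
        have hk : x.1 = ![a1,a2,a3] k := (adj_lr A a a1 a2 a3 i x k).mp e2
        have : j ≠ k := fun h => d3 (by rw [← hj, h])
        exact hdist j k this (hx ▸ hk ▸ rfl)
    · exfalso
      rw [h21] at e1
      exact adj_rr A a a1 a2 a3 j k e1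
  · -- p.2.1 = inr j
    rw [← hj] at e1 e2
    rcases h11 : p.1 with ⟨⟨i, x⟩⟩ | k
    · rcases h22 : p.2.2 with ⟨⟨i', x'⟩⟩ | k
      · rw [h11] at e1 d3
        rw [h22] at e2 d3
        have hx : x.1 = ![a1,a2,a3] j := (adj_lr A a a1 a2 a3 i x j).mp e1
        have hx' : x'.1 = ![a1,a2,a3] j := (adj_lr A a a1 a2 a3 i' x' j).mp e2.symm
        have hii' : i ≠ i' := by
          rintro rfl
          exact d3 (by rw [Subtype.ext (hx.trans hx'.symm)])
        refine Or.inr ⟨i, i', x, x', hii', hx, hx', ?_⟩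
        rw [hfin, ← hj, h11, h22, perm3' (Sum.inl (i,x))]
      · exfalso
        rw [h22] at e2
        exact adj_rr A a a1 a2 a3 j k e2
    · exfalso
      rw [h11] at e1
      exact adj_rr A a a1 a2 a3 k j e1
  · -- p.2.2 = inr j
    rw [← hj] at e2
    rcases h21 : p.2.1 with ⟨⟨i, x⟩⟩ | k
    · rw [h21] at e1 e2
      have hx : x.1 = ![a1,a2,a3] j := (adj_lr A a a1 a2 a3 i x j).mp e2
      rcases h11 : p.1 with ⟨⟨i', y⟩⟩ | k
      · rw [h11] at e1
        obtain ⟨rfl, hadj⟩ := (adj_ll A a a1 a2 a3 i' i y x).mp e1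
        refine Or.inl ⟨i', x, y, hx, hadj.symm, ?_⟩
        rw [hfin, ← hj, h21, h11, perm3 (Sum.inl (i',y))]
      · exfalso
        rw [h11] at e1 d3
        have hk : x.1 = ![a1,a2,a3] k := (adj_lr A a a1 a2 a3 i x k).mp e1.symm
        have : j ≠ k := fun h => d3 (by rw [← hj, h])
        exact hdist j k this (hx ▸ hk ▸ rfl)
    · exfalso
      rw [h21] at e2
      exact adj_rr A a a1 a2 a3 k j e2
lemma interA (a : V) (j i0 i : Fin 3) (u v : {x : V // x ≠ a}) :
    (({Sum.inr j, Sum.inl (i0, u), Sum.inl (i0, v)} :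
      Finset ((Fin 3 × {x : V // x ≠ a}) ⊕ Fin 3)) ∩ CFin a i) =
    if i = i0 then {Sum.inl (i0, u), Sum.inl (i0, v)} else ∅ := by
  ext w
  simp only [Finset.mem_inter, Finset.mem_insert, Finset.mem_singleton]
  by_cases h : i = i0
  · subst h
    rw [if_pos rfl]
    simp only [Finset.mem_insert, Finset.mem_singleton]
    constructor
    · rintro ⟨rfl | rfl | rfl, hc⟩
      · exact absurd hc (inr_notMem_CFin a i j)
      · exact Or.inl rfl
      · exact Or.inr rfl
    · rintro (rfl | rfl)
      · exact ⟨Or.inr (Or.inl rfl), by simp⟩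
      · exact ⟨Or.inr (Or.inr rfl), by simp⟩
  · rw [if_neg h]
    simp only [Finset.notMem_empty, iff_false]
    rintro ⟨rfl | rfl | rfl, hc⟩
    · exact inr_notMem_CFin a i j hc
    · exact h ((inl_mem_CFin a i i0 u).mp hc).symm
    · exact h ((inl_mem_CFin a i i0 v).mp hc).symm

lemma interB (a : V) (j i0 i1 i : Fin 3) (u v : {x : V // x ≠ a}) (h01 : i0 ≠ i1) :
    (({Sum.inr j, Sum.inl (i0, u), Sum.inl (i1, v)} :
      Finset ((Fin 3 × {x : V // x ≠ a}) ⊕ Fin 3)) ∩ CFin a i) =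
    if i = i0 then {Sum.inl (i0, u)} else if i = i1 then {Sum.inl (i1, v)} else ∅ := by
  ext w
  simp only [Finset.mem_inter, Finset.mem_insert, Finset.mem_singleton]
  by_cases h : i = i0
  · subst h
    rw [if_pos rfl]
    simp only [Finset.mem_singleton]
    constructor
    · rintro ⟨rfl | rfl | rfl, hc⟩
      · exact absurd hc (inr_notMem_CFin a i j)
      · rfl
      · exact absurd ((inl_mem_CFin a i i1 v).mp hc) h01.symm
    · rintro rfl
      exact ⟨Or.inr (Or.inl rfl), by simp⟩
  · rw [if_neg h]
    by_cases h' : i = i1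
    · subst h'
      rw [if_pos rfl]
      simp only [Finset.mem_singleton]
      constructor
      · rintro ⟨rfl | rfl | rfl, hc⟩
        · exact absurd hc (inr_notMem_CFin a i j)
        · exact absurd ((inl_mem_CFin a i i0 u).mp hc).symm h
        · rfl
      · rintro rfl
        exact ⟨Or.inr (Or.inr rfl), by simp⟩
    · rw [if_neg h']
      simp only [Finset.notMem_empty, iff_false]
      rintro ⟨rfl | rfl | rfl, hc⟩
      · exact inr_notMem_CFin a i j hc
      · exact h ((inl_mem_CFin a i i0 u).mp hc).symm
      · exact h' ((inl_mem_CFin a i i1 v).mp hc).symm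

lemma no_inr_single_copy (A : SimpleGraph V) (a a1 a2 a3 : V)
    (p : (((Fin 3 × {x : V // x ≠ a}) ⊕ Fin 3) × ((Fin 3 × {x : V // x ≠ a}) ⊕ Fin 3) ×
      ((Fin 3 × {x : V // x ≠ a}) ⊕ Fin 3)))
    (hp : IsPathL (YSame A a a1 a2 a3) p) (h : ∀ j, Sum.inr j ∉ pVerts p) :
    ∃ (i : Fin 3) (x y z : {x : V // x ≠ a}),
      p = (Sum.inl (i, x), Sum.inl (i, y), Sum.inl (i, z)) := by
  obtain ⟨d1, d2, d3, e1, e2⟩ := hp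
  rcases h11 : p.1 with ⟨⟨i1, x⟩⟩ | k
  · rcases h21 : p.2.1 with ⟨⟨i2, y⟩⟩ | k
    · rcases h22 : p.2.2 with ⟨⟨i3, z⟩⟩ | k
      · rw [h11, h21] at e1
        rw [h21, h22] at e2
        obtain ⟨rfl, -⟩ := (adj_ll A a a1 a2 a3 i1 i2 x y).mp e1
        obtain ⟨rfl, -⟩ := (adj_ll A a a1 a2 a3 i1 i3 y z).mp e2
        exact ⟨i1, x, y, z, by rw [← h11, ← h21, ← h22]⟩
      · exact absurd (by rw [← h22]; exact Or.inr (Or.inr rfl)) (h k)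
    · exact absurd (by rw [← h21]; exact Or.inr (Or.inl rfl)) (h k)
  · exact absurd (by rw [← h11]; exact Or.inl rfl) (h k)

lemma copy_count (A : SimpleGraph V) (a a1 a2 a3 : V)
    (P : Finset (((Fin 3 × {x : V // x ≠ a}) ⊕ Fin 3) × ((Fin 3 × {x : V // x ≠ a}) ⊕ Fin 3) ×
      ((Fin 3 × {x : V // x ≠ a}) ⊕ Fin 3)))
    (hP : IsFactor (YSame A a a1 a2 a3) P)
    (p : Fin 3 → (((Fin 3 × {x : V // x ≠ a}) ⊕ Fin 3) × ((Fin 3 × {x : V // x ≠ a}) ⊕ Fin 3) ×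
      ((Fin 3 × {x : V // x ≠ a}) ⊕ Fin 3)))
    (hpP : ∀ j, p j ∈ P) (hpz : ∀ j, Sum.inr j ∈ pVerts (p j))
    (hinj : ∀ j k, p j = p k → j = k) (i : Fin 3) :
    (Fintype.card V - 1) % 3 =
      ((pFin (p 0) ∩ CFin a i).card + (pFin (p 1) ∩ CFin a i).card +
        (pFin (p 2) ∩ CFin a i).card) % 3 := by
  classical
  obtain ⟨⟨hpath, hdisj⟩, -, hcover⟩ := hP
  have huniq : ∀ q ∈ P, ∀ q' ∈ P, ∀ w, w ∈ pVerts q → w ∈ pVerts q' → q = q' := by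
    intro q hq q' hq' w hwq hwq'
    by_contra hne
    exact (Set.disjoint_left.mp (hdisj q hq q' hq' hne) hwq) hwq'
  have hbi : CFin a i = P.biUnion (fun q => pFin q ∩ CFin a i) := by
    ext w
    simp only [Finset.mem_biUnion, Finset.mem_inter]
    constructor
    · intro hw
      obtain ⟨q, hq, hwq⟩ := hcover w trivial
      exact ⟨q, hq, (mem_pFin q w).mpr hwq, hw⟩
    · rintro ⟨q, -, -, hw⟩
      exact hw
  have hdisj2 : ∀ q ∈ P, ∀ q' ∈ P, q ≠ q' →
      Disjoint (pFin q ∩ CFin a i) (pFin q' ∩ CFin a i) := by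
    intro q hq q' hq' hne
    rw [Finset.disjoint_left]
    intro w hw hw'
    exact hne (huniq q hq q' hq' w ((mem_pFin q w).mp (Finset.mem_inter.mp hw).1)
      ((mem_pFin q' w).mp (Finset.mem_inter.mp hw').1))
  have hcard : (CFin a i).card = ∑ q ∈ P, (pFin q ∩ CFin a i).card := by
    conv_lhs => rw [hbi]
    exact Finset.card_biUnion hdisj2
  set Z := ({p 0, p 1, p 2} : Finset (((Fin 3 × {x : V // x ≠ a}) ⊕ Fin 3) ×
    ((Fin 3 × {x : V // x ≠ a}) ⊕ Fin 3) × ((Fin 3 × {x : V // x ≠ a}) ⊕ Fin 3))) with hZ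
  have hZP : Z ⊆ P := by
    intro q hq
    rw [hZ] at hq
    rcases Finset.mem_insert.mp hq with rfl | hq
    · exact hpP 0
    rcases Finset.mem_insert.mp hq with rfl | hq
    · exact hpP 1
    rw [Finset.mem_singleton] at hq
    subst hq
    exact hpP 2
  have hsplit : ∑ q ∈ P \ Z, (pFin q ∩ CFin a i).card + ∑ q ∈ Z, (pFin q ∩ CFin a i).card
      = ∑ q ∈ P, (pFin q ∩ CFin a i).card := Finset.sum_sdiff hZP
  have hZsum : ∑ q ∈ Z, (pFin q ∩ CFin a i).card =
      (pFin (p 0) ∩ CFin a i).card + (pFin (p 1) ∩ CFin a i).card +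
        (pFin (p 2) ∩ CFin a i).card := by
    rw [hZ]
    rw [Finset.sum_insert (by
      simp only [Finset.mem_insert, Finset.mem_singleton]
      rintro (h | h) <;> exact absurd (hinj _ _ h) (by decide))]
    rw [Finset.sum_insert (by
      simp only [Finset.mem_singleton]
      intro h
      exact absurd (hinj _ _ h) (by decide))]
    rw [Finset.sum_singleton, add_assoc]
  have hrest : (∑ q ∈ P \ Z, (pFin q ∩ CFin a i).card) % 3 = 0 := by
    rw [Finset.sum_nat_mod]
    have : ∀ q ∈ P \ Z, (pFin q ∩ CFin a i).card % 3 = 0 := by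
      intro q hq
      obtain ⟨hqP, hqZ⟩ := Finset.mem_sdiff.mp hq
      have hnoz : ∀ j, Sum.inr j ∉ pVerts q := by
        intro j hj
        have : q = p j := huniq q hqP (p j) (hpP j) _ hj (hpz j)
        subst this
        refine hqZ ?_
        rw [hZ]
        fin_cases j <;> simp
      obtain ⟨i'', x, y, z, rfl⟩ := no_inr_single_copy A a a1 a2 a3 q (hpath q hqP) hnoz
      by_cases h : i'' = i
      · subst h
        have hsub : pFin (Sum.inl (i'', x), Sum.inl (i'', y), Sum.inl (i'', z)) ∩ CFin a i''
            = pFin (Sum.inl (i'', x), Sum.inl (i'', y), Sum.inl (i'', z)) := by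
          refine Finset.inter_eq_left.mpr ?_
          intro w hw
          simp only [pFin, Finset.mem_insert, Finset.mem_singleton] at hw
          rcases hw with rfl | rfl | rfl <;> simp
        rw [hsub, card_pFin _ _ (hpath _ hqP)]
      · have hsub : pFin (Sum.inl (i'', x), Sum.inl (i'', y), Sum.inl (i'', z)) ∩ CFin a i
            = ∅ := by
          rw [Finset.eq_empty_iff_forall_notMem]
          intro w hw
          obtain ⟨hw1, hw2⟩ := Finset.mem_inter.mp hw
          simp only [pFin, Finset.mem_insert, Finset.mem_singleton] at hw1
          rcases hw1 with rfl | rfl | rfl <;> exact h ((inl_mem_CFin a i i'' _).mp hw2)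
        rw [hsub]
        simp
    rw [Finset.sum_congr rfl this]
    simp
  rw [← card_CFin a i, hcard, ← hsplit, ← hZsum, Nat.add_mod, hrest]
  simp
def piV (a : V) : (Fin 3 × {x : V // x ≠ a}) ⊕ Fin 3 → V :=
  Sum.elim (fun ix => ix.2.1) (fun _ => a)

def projT (a : V) (q : (((Fin 3 × {x : V // x ≠ a}) ⊕ Fin 3) × ((Fin 3 × {x : V // x ≠ a}) ⊕ Fin 3) ×
    ((Fin 3 × {x : V // x ≠ a}) ⊕ Fin 3))) : V × V × V :=
  (piV a q.1, piV a q.2.1, piV a q.2.2)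

lemma key (A : SimpleGraph V) (a a1 a2 a3 : V)
    (P : Finset (((Fin 3 × {x : V // x ≠ a}) ⊕ Fin 3) × ((Fin 3 × {x : V // x ≠ a}) ⊕ Fin 3) ×
      ((Fin 3 × {x : V // x ≠ a}) ⊕ Fin 3)))
    (hP : IsFactor (YSame A a a1 a2 a3) P)
    (i : Fin 3) (t : V × V × V)
    (ht : IsPathL A t) (hte : s(a, a1) ∈ pEdges t)
    (hverts : ∀ x : V, x ∈ pVerts t ↔ x = a ∨
      ∃ (h : x ≠ a), ∃ q ∈ P, (¬ ∀ w ∈ pFin q, w ∈ CFin a i) ∧ Sum.inl (i, ⟨x, h⟩) ∈ pFin q) :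
    ∃ PA, IsFactor A PA ∧ PContains PA s(a, a1) := by
  classical
  obtain ⟨⟨hpath, hdisj⟩, -, hcover⟩ := hP
  have huniq : ∀ p ∈ P, ∀ q ∈ P, ∀ w, w ∈ pVerts p → w ∈ pVerts q → p = q := by
    intro p hp q hq w hwp hwq
    by_contra hne
    exact (Set.disjoint_left.mp (hdisj p hp q hq hne) hwp) hwq
  set Q := P.filter (fun q => ∀ w ∈ pFin q, w ∈ CFin a i) with hQ
  have hstr : ∀ q ∈ Q, ∃ x y z : {x : V // x ≠ a},
      q = (Sum.inl (i, x), Sum.inl (i, y), Sum.inl (i, z)) := by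
    intro q hq
    rw [hQ, Finset.mem_filter] at hq
    obtain ⟨x, hx⟩ := (mem_CFin a i q.1).mp (hq.2 q.1 (by simp [pFin]))
    obtain ⟨y, hy⟩ := (mem_CFin a i q.2.1).mp (hq.2 q.2.1 (by simp [pFin]))
    obtain ⟨z, hz⟩ := (mem_CFin a i q.2.2).mp (hq.2 q.2.2 (by simp [pFin]))
    exact ⟨x, y, z, by rw [← hx, ← hy, ← hz]⟩
  have hmemproj : ∀ q ∈ Q, ∀ v : V,
      v ∈ pVerts (projT a q) ↔ ∃ h : v ≠ a, Sum.inl (i, ⟨v, h⟩) ∈ pVerts q := by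
    intro q hq v
    obtain ⟨x, y, z, rfl⟩ := hstr q hq
    simp only [projT, piV, pVerts, Set.mem_insert_iff, Set.mem_singleton_iff, Sum.elim_inl,
      Sum.inl.injEq, Prod.mk.injEq, true_and]
    constructor
    · rintro (rfl | rfl | rfl)
      · exact ⟨x.2, Or.inl (by simp)⟩
      · exact ⟨y.2, Or.inr (Or.inl (by simp))⟩
      · exact ⟨z.2, Or.inr (Or.inr (by simp))⟩
    · rintro ⟨h, (h' | h' | h')⟩
      · exact Or.inl (congrArg Subtype.val h')
      · exact Or.inr (Or.inl (congrArg Subtype.val h'))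
      · exact Or.inr (Or.inr (congrArg Subtype.val h'))
  have hQP : ∀ q ∈ Q, q ∈ P := fun q hq => (Finset.mem_filter.mp hq).1
  have haux : ∀ q ∈ Q, ∀ v : V, v ∈ pVerts (projT a q) → v ∈ pVerts t → False := by
    intro q hq v hv hvt
    obtain ⟨h, hmem⟩ := (hmemproj q hq v).mp hv
    rcases (hverts v).mp hvt with rfl | ⟨h', q', hq', hnint, hmem'⟩
    · exact h rfl
    · have hne : q ≠ q' := by
        rintro rfl
        exact hnint (Finset.mem_filter.mp hq).2
      exact hne (huniq q (hQP q hq) q' hq' _ hmem ((mem_pFin q' _).mp hmem'))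
  refine ⟨insert t (Q.image (projT a)), ⟨⟨?_, ?_⟩, fun _ _ => Set.subset_univ _, ?_⟩,
    t, Finset.mem_insert_self _ _, hte⟩
  · intro r hr
    rcases Finset.mem_insert.mp hr with rfl | hr
    · exact ht
    · obtain ⟨q, hq, rfl⟩ := Finset.mem_image.mp hr
      obtain ⟨x, y, z, rfl⟩ := hstr q hq
      obtain ⟨h1, h2, h3, h4, h5⟩ := hpath _ (hQP _ hq)
      refine ⟨fun h => h1 ?_, fun h => h2 ?_, fun h => h3 ?_, ?_, ?_⟩
      · simp only [projT, piV, Sum.elim_inl] at h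
        simp [Subtype.ext h]
      · simp only [projT, piV, Sum.elim_inl] at h
        simp [Subtype.ext h]
      · simp only [projT, piV, Sum.elim_inl] at h
        simp [Subtype.ext h]
      · exact ((adj_ll A a a1 a2 a3 i i x y).mp h4).2
      · exact ((adj_ll A a a1 a2 a3 i i y z).mp h5).2
  · intro r hr r' hr' hne
    rw [Set.disjoint_left]
    intro v hv hv'
    rcases Finset.mem_insert.mp hr with h1 | h1
    · rcases Finset.mem_insert.mp hr' with h2 | h2
      · exact hne (h1.trans h2.symm)
      · obtain ⟨q, hq, hpq⟩ := Finset.mem_image.mp h2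
        subst h1
        rw [← hpq] at hv'
        exact haux q hq v hv' hv
    · rcases Finset.mem_insert.mp hr' with h2 | h2
      · obtain ⟨q, hq, hpq⟩ := Finset.mem_image.mp h1
        subst h2
        rw [← hpq] at hv
        exact haux q hq v hv hv'
      · obtain ⟨q, hq, hpq⟩ := Finset.mem_image.mp h1
        obtain ⟨q', hq', hpq'⟩ := Finset.mem_image.mp h2
        rw [← hpq] at hv
        rw [← hpq'] at hv'
        have hqq' : q ≠ q' := fun h => hne (by rw [← hpq, ← hpq', h])
        obtain ⟨h, hmem⟩ := (hmemproj q hq v).mp hv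
        obtain ⟨h', hmem'⟩ := (hmemproj q' hq' v).mp hv'
        exact hqq' (huniq q (hQP q hq) q' (hQP q' hq') _ hmem hmem')
  · intro v _
    by_cases hva : v = a
    · exact ⟨t, Finset.mem_insert_self _ _, (hverts v).mpr (Or.inl hva)⟩
    · obtain ⟨q, hq, hvq⟩ := hcover (Sum.inl (i, ⟨v, hva⟩)) trivial
      by_cases hint : ∀ w ∈ pFin q, w ∈ CFin a i
      · have hqQ : q ∈ Q := Finset.mem_filter.mpr ⟨hq, hint⟩
        exact ⟨projT a q, Finset.mem_insert_of_mem (Finset.mem_image_of_mem _ hqQ),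
          (hmemproj q hqQ v).mpr ⟨hva, hvq⟩⟩
      · exact ⟨t, Finset.mem_insert_self _ _,
          (hverts v).mpr (Or.inr ⟨hva, q, hq, hint, (mem_pFin q _).mpr hvq⟩)⟩

end S11

/-- If `A` is cubic, `v(A) ≡ 0 (mod 6)`, and `A` has no `Λ`-factor containing the edge
`aa₁`, then `G = Y(A,a)` satisfies `v(G) ≡ 0 (mod 6)` and has no `Λ`-factor. -/
theorem stmt11 {V : Type*} [Fintype V] [DecidableEq V]
    (A : SimpleGraph V) (a a1 a2 a3 : V)
    (hcub : IsCubic A) (hmod : Fintype.card V % 6 = 0)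
    (hN : A.neighborSet a = {a1, a2, a3})
    (h12 : a1 ≠ a2) (h13 : a1 ≠ a3) (h23 : a2 ≠ a3)
    (hA : ¬ ∃ P, IsFactor A P ∧ PContains P s(a, a1)) :
    Fintype.card ((Fin 3 × {x : V // x ≠ a}) ⊕ Fin 3) % 6 = 0 ∧
    ¬ ∃ P, IsFactor (YSame A a a1 a2 a3) P := by
  classical
  have hcV : 1 ≤ Fintype.card V := Fintype.card_pos_iff.mpr ⟨a⟩
  have hcardW : Fintype.card ((Fin 3 × {x : V // x ≠ a}) ⊕ Fin 3)
      = 3 * (Fintype.card V - 1) + 3 := by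
    simp [Fintype.card_subtype_compl]
  refine ⟨by omega, ?_⟩
  rintro ⟨P, hP⟩
  apply hA
  have hAdj1 : A.Adj a a1 := by rw [← SimpleGraph.mem_neighborSet, hN]; simp
  have hAdj2 : A.Adj a a2 := by rw [← SimpleGraph.mem_neighborSet, hN]; simp
  have hAdj3 : A.Adj a a3 := by rw [← SimpleGraph.mem_neighborSet, hN]; simp
  obtain ⟨⟨hpath, hdisj⟩, -, hcover⟩ := hP
  have hP' : IsFactor (YSame A a a1 a2 a3) P := ⟨⟨hpath, hdisj⟩, fun _ _ => Set.subset_univ _, hcover⟩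
  have huniq : ∀ q ∈ P, ∀ q' ∈ P, ∀ w, w ∈ pVerts q → w ∈ pVerts q' → q = q' := by
    intro q hq q' hq' w hwq hwq'
    by_contra hne
    exact (Set.disjoint_left.mp (hdisj q hq q' hq' hne) hwq) hwq'
  have hz : ∀ j : Fin 3, ∃ q ∈ P, Sum.inr j ∈ pVerts q := fun j => hcover (Sum.inr j) trivial
  choose p hpP hpz using hz
  have hcls := fun j => S11.classify A a a1 a2 a3 h12 h13 h23 (p j) (hpath (p j) (hpP j)) j (hpz j)
  have hinj : ∀ j k : Fin 3, p j = p k → j = k := by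
    intro j k h
    have hk := hpz k
    rw [← h] at hk
    have hk' := (S11.mem_pFin (p j) (Sum.inr k)).mpr hk
    rcases hcls j with ⟨i, x, y, -, -, hfin⟩ | ⟨i, i', x, x', -, -, -, hfin⟩ <;>
    · rw [hfin] at hk'
      simp only [Finset.mem_insert, Finset.mem_singleton, Sum.inr.injEq] at hk'
      tauto
  have hnintp : ∀ (j i : Fin 3), ¬ ∀ w ∈ S11.pFin (p j), w ∈ S11.CFin a i := by
    intro j i hall
    exact S11.inr_notMem_CFin a i j (hall _ ((S11.mem_pFin _ _).mpr (hpz j)))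
  have hqid : ∀ q ∈ P, ∀ (i : Fin 3) (w : {x : V // x ≠ a}), Sum.inl (i, w) ∈ S11.pFin q →
      (¬ ∀ w' ∈ S11.pFin q, w' ∈ S11.CFin a i) → ∃ j : Fin 3, q = p j := by
    intro q hq i w hmem hnint
    by_cases hzq : ∃ j, Sum.inr j ∈ pVerts q
    · obtain ⟨j, hj⟩ := hzq
      exact ⟨j, huniq q hq (p j) (hpP j) _ hj (hpz j)⟩
    · exfalso
      push_neg at hzq
      obtain ⟨i'', x_, y_, z_, rfl⟩ := S11.no_inr_single_copy A a a1 a2 a3 q (hpath q hq) hzq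
      have hi : i'' = i := by
        simp only [S11.pFin, Finset.mem_insert, Finset.mem_singleton, Sum.inl.injEq,
          Prod.mk.injEq] at hmem
        tauto
      subst hi
      refine hnint ?_
      intro w' hw'
      simp only [S11.pFin, Finset.mem_insert, Finset.mem_singleton] at hw'
      rcases hw' with rfl | rfl | rfl <;> simp
  have hmodc : ∀ i : Fin 3,
      ((S11.pFin (p 0) ∩ S11.CFin a i).card + (S11.pFin (p 1) ∩ S11.CFin a i).card +
        (S11.pFin (p 2) ∩ S11.CFin a i).card) % 3 = 2 := by
    intro i
    have h1 := S11.copy_count A a a1 a2 a3 P hP' p hpP hpz hinj i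
    omega
  have hdat : ∀ j : Fin 3,
      ((S11.pFin (p j) ∩ S11.CFin a 0).card + (S11.pFin (p j) ∩ S11.CFin a 1).card +
        (S11.pFin (p j) ∩ S11.CFin a 2).card = 2) ∧
      (S11.pFin (p j) ∩ S11.CFin a 0).card ≤ 2 ∧
      (S11.pFin (p j) ∩ S11.CFin a 1).card ≤ 2 ∧
      (S11.pFin (p j) ∩ S11.CFin a 2).card ≤ 2 := by
    intro j
    rcases hcls j with ⟨i0, x, y, hx, hadjxy, hfin⟩ | ⟨i0, i0', x, x', hii, hx, hx', hfin⟩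
    · have hxy : (Sum.inl (i0, x) : (Fin 3 × {x : V // x ≠ a}) ⊕ Fin 3) ≠ Sum.inl (i0, y) := by
        intro h
        injection h with h'
        rw [Prod.mk.injEq] at h'
        exact hadjxy.ne (congrArg Subtype.val h'.2)
      have hci : ∀ i, (S11.pFin (p j) ∩ S11.CFin a i).card = if i = i0 then 2 else 0 := by
        intro i
        rw [hfin, S11.interA]
        split
        · exact Finset.card_pair hxy
        · exact Finset.card_empty
      rw [hci 0, hci 1, hci 2]
      refine ⟨?_, ?_, ?_, ?_⟩ <;> fin_cases i0 <;> decide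
    · have hci : ∀ i, (S11.pFin (p j) ∩ S11.CFin a i).card =
          if i = i0 then 1 else if i = i0' then 1 else 0 := by
        intro i
        rw [hfin, S11.interB a j i0 i0' i x x' hii]
        split
        · exact Finset.card_singleton _
        split
        · exact Finset.card_singleton _
        · exact Finset.card_empty
      rw [hci 0, hci 1, hci 2]
      refine ⟨?_, ?_, ?_, ?_⟩ <;> fin_cases i0 <;> fin_cases i0' <;>
        first
        | exact absurd rfl hii
        | decide
  have hS : ∀ i : Fin 3,
      (S11.pFin (p 0) ∩ S11.CFin a i).card + (S11.pFin (p 1) ∩ S11.CFin a i).card +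
        (S11.pFin (p 2) ∩ S11.CFin a i).card = 2 := by
    have m0 := hmodc 0
    have m1 := hmodc 1
    have m2 := hmodc 2
    have d0 := hdat 0
    have d1 := hdat 1
    have d2 := hdat 2
    have hS0 : (S11.pFin (p 0) ∩ S11.CFin a 0).card + (S11.pFin (p 1) ∩ S11.CFin a 0).card +
        (S11.pFin (p 2) ∩ S11.CFin a 0).card = 2 := by omega
    have hS1 : (S11.pFin (p 0) ∩ S11.CFin a 1).card + (S11.pFin (p 1) ∩ S11.CFin a 1).card +
        (S11.pFin (p 2) ∩ S11.CFin a 1).card = 2 := by omega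
    have hS2 : (S11.pFin (p 0) ∩ S11.CFin a 2).card + (S11.pFin (p 1) ∩ S11.CFin a 2).card +
        (S11.pFin (p 2) ∩ S11.CFin a 2).card = 2 := by omega
    intro i
    fin_cases i
    · exact hS0
    · exact hS1
    · exact hS2
  have hfin3 : ∀ j : Fin 3, j = 0 ∨ j = 1 ∨ j = 2 := by
    intro j
    fin_cases j
    · exact Or.inl rfl
    · exact Or.inr (Or.inl rfl)
    · exact Or.inr (Or.inr rfl)
  rcases hcls 0 with ⟨i0, x, y, hx, hadjxy, hfin0⟩ | ⟨i0, i0', x, x', hii, hx, hx', hfin0⟩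
  · -- Case A : z0 is an endpoint of its path
    have hx1 : x.1 = a1 := by simpa using hx
    have hadj1y : A.Adj a1 y.1 := hx1 ▸ hadjxy
    have hxy : (Sum.inl (i0, x) : (Fin 3 × {x : V // x ≠ a}) ⊕ Fin 3) ≠ Sum.inl (i0, y) := by
      intro h
      injection h with h'
      rw [Prod.mk.injEq] at h'
      exact hadjxy.ne (congrArg Subtype.val h'.2)
    have hc00 : (S11.pFin (p 0) ∩ S11.CFin a i0).card = 2 := by
      rw [hfin0, S11.interA, if_pos rfl]
      exact Finset.card_pair hxy
    have hSi := hS i0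
    have he1 : S11.pFin (p 1) ∩ S11.CFin a i0 = ∅ := Finset.card_eq_zero.mp (by omega)
    have he2 : S11.pFin (p 2) ∩ S11.CFin a i0 = ∅ := Finset.card_eq_zero.mp (by omega)
    refine S11.key A a a1 a2 a3 P hP' i0 (a, a1, y.1)
      ⟨hAdj1.ne, hadj1y.ne, fun h => y.2 h.symm, hAdj1, hadj1y⟩
      (by simp [pEdges]) ?_
    intro v
    simp only [pVerts, Set.mem_insert_iff, Set.mem_singleton_iff]
    constructor
    · rintro (rfl | rfl | rfl)
      · exact Or.inl rfl
      · refine Or.inr ⟨hAdj1.ne', p 0, hpP 0, hnintp 0 i0, ?_⟩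
        have hxx : (⟨v, hAdj1.ne'⟩ : {x : V // x ≠ a}) = x := Subtype.ext hx1.symm
        rw [hfin0, hxx]
        simp
      · refine Or.inr ⟨y.2, p 0, hpP 0, hnintp 0 i0, ?_⟩
        have hyy : (⟨y.1, y.2⟩ : {x : V // x ≠ a}) = y := Subtype.ext rfl
        rw [hfin0, hyy]
        simp
    · rintro (rfl | ⟨h, q, hq, hqnint, hqmem⟩)
      · exact Or.inl rfl
      · obtain ⟨j, rfl⟩ := hqid q hq i0 ⟨v, h⟩ hqmem hqnint
        have hmi : Sum.inl (i0, (⟨v, h⟩ : {x : V // x ≠ a})) ∈ S11.pFin (p j) ∩ S11.CFin a i0 :=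
          Finset.mem_inter.mpr ⟨hqmem, by simp⟩
        rcases hfin3 j with rfl | rfl | rfl
        · rw [hfin0, S11.interA, if_pos rfl] at hmi
          simp only [Finset.mem_insert, Finset.mem_singleton, Sum.inl.injEq, Prod.mk.injEq,
            true_and] at hmi
          rcases hmi with h' | h'
          · exact Or.inr (Or.inl (by rw [← hx1]; exact congrArg Subtype.val h'))
          · exact Or.inr (Or.inr (congrArg Subtype.val h'))
        · rw [he1] at hmi
          exact absurd hmi (Finset.notMem_empty _)
        · rw [he2] at hmi
          exact absurd hmi (Finset.notMem_empty _)
  · -- Case B : z0 is the middle of its path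
    have hx1 : x.1 = a1 := by simpa using hx
    have hc00 : (S11.pFin (p 0) ∩ S11.CFin a i0).card = 1 := by
      rw [hfin0, S11.interB a 0 i0 i0' i0 x x' hii, if_pos rfl]
      exact Finset.card_singleton _
    have hint0 : S11.pFin (p 0) ∩ S11.CFin a i0 = {Sum.inl (i0, x)} := by
      rw [hfin0, S11.interB a 0 i0 i0' i0 x x' hii, if_pos rfl]
    have hSi := hS i0
    have hcase : ((S11.pFin (p 1) ∩ S11.CFin a i0).card = 1 ∧
          (S11.pFin (p 2) ∩ S11.CFin a i0).card = 0) ∨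
        ((S11.pFin (p 1) ∩ S11.CFin a i0).card = 0 ∧
          (S11.pFin (p 2) ∩ S11.CFin a i0).card = 1) := by omega
    rcases hcase with ⟨hc1, hc2⟩ | ⟨hc1, hc2⟩
    · -- the second path through copy i0 is the one through z1, ending at a2
      have he2 : S11.pFin (p 2) ∩ S11.CFin a i0 = ∅ := Finset.card_eq_zero.mp hc2
      obtain ⟨uu, huu2, hint1⟩ : ∃ uu : {x : V // x ≠ a}, uu.1 = a2 ∧
          S11.pFin (p 1) ∩ S11.CFin a i0 = {Sum.inl (i0, uu)} := by
        rcases hcls 1 with ⟨i1, u, w, hu, hadjuw, hfin1⟩ | ⟨i1, i1', u, u', hii1, hu, hu', hfin1⟩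
        · exfalso
          have huw : (Sum.inl (i1, u) : (Fin 3 × {x : V // x ≠ a}) ⊕ Fin 3) ≠ Sum.inl (i1, w) := by
            intro h
            injection h with h'
            rw [Prod.mk.injEq] at h'
            exact hadjuw.ne (congrArg Subtype.val h'.2)
          rw [hfin1, S11.interA] at hc1
          by_cases hh : i0 = i1
          · rw [if_pos hh, Finset.card_pair huw] at hc1
            omega
          · rw [if_neg hh, Finset.card_empty] at hc1
            omega
        · have hu2 : u.1 = a2 := by simpa using hu
          have hu2' : u'.1 = a2 := by simpa using hu'
          rw [hfin1, S11.interB a 1 i1 i1' i0 u u' hii1] at hc1 ⊢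
          by_cases hh : i0 = i1
          · rw [if_pos hh] at hc1 ⊢
            exact ⟨u, hu2, by rw [hh]⟩
          · rw [if_neg hh] at hc1 ⊢
            by_cases hh' : i0 = i1'
            · rw [if_pos hh'] at hc1 ⊢
              exact ⟨u', hu2', by rw [hh']⟩
            · rw [if_neg hh', Finset.card_empty] at hc1
              omega
      have hmem1 : Sum.inl (i0, uu) ∈ S11.pFin (p 1) :=
        (Finset.mem_inter.mp (hint1 ▸ Finset.mem_singleton_self _)).1
      refine S11.key A a a1 a2 a3 P hP' i0 (a1, a, a2)
        ⟨hAdj1.ne', hAdj2.ne, h12, hAdj1.symm, hAdj2⟩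
        (by simp only [pEdges, Set.mem_insert_iff]; left; exact Sym2.eq_swap) ?_
      intro v
      simp only [pVerts, Set.mem_insert_iff, Set.mem_singleton_iff]
      constructor
      · rintro (rfl | rfl | rfl)
        · refine Or.inr ⟨hAdj1.ne', p 0, hpP 0, hnintp 0 i0, ?_⟩
          have hxx : (⟨v, hAdj1.ne'⟩ : {x : V // x ≠ a}) = x := Subtype.ext hx1.symm
          rw [hfin0, hxx]
          simp
        · exact Or.inl rfl
        · refine Or.inr ⟨hAdj2.ne', p 1, hpP 1, hnintp 1 i0, ?_⟩
          have huuu : (⟨v, hAdj2.ne'⟩ : {x : V // x ≠ a}) = uu := Subtype.ext huu2.symm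
          rw [huuu]
          exact hmem1
      · rintro (rfl | ⟨h, q, hq, hqnint, hqmem⟩)
        · exact Or.inr (Or.inl rfl)
        · obtain ⟨j, rfl⟩ := hqid q hq i0 ⟨v, h⟩ hqmem hqnint
          have hmi : Sum.inl (i0, (⟨v, h⟩ : {x : V // x ≠ a})) ∈ S11.pFin (p j) ∩ S11.CFin a i0 :=
            Finset.mem_inter.mpr ⟨hqmem, by simp⟩
          rcases hfin3 j with rfl | rfl | rfl
          · rw [hint0] at hmi
            simp only [Finset.mem_singleton, Sum.inl.injEq, Prod.mk.injEq, true_and] at hmi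
            exact Or.inl (by rw [← hx1]; exact congrArg Subtype.val hmi)
          · rw [hint1] at hmi
            simp only [Finset.mem_singleton, Sum.inl.injEq, Prod.mk.injEq, true_and] at hmi
            exact Or.inr (Or.inr (by rw [← huu2]; exact congrArg Subtype.val hmi))
          · rw [he2] at hmi
            exact absurd hmi (Finset.notMem_empty _)
    · -- the second path through copy i0 is the one through z2, ending at a3
      have he1 : S11.pFin (p 1) ∩ S11.CFin a i0 = ∅ := Finset.card_eq_zero.mp hc1
      obtain ⟨uu, huu2, hint2⟩ : ∃ uu : {x : V // x ≠ a}, uu.1 = a3 ∧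
          S11.pFin (p 2) ∩ S11.CFin a i0 = {Sum.inl (i0, uu)} := by
        rcases hcls 2 with ⟨i1, u, w, hu, hadjuw, hfin1⟩ | ⟨i1, i1', u, u', hii1, hu, hu', hfin1⟩
        · exfalso
          have huw : (Sum.inl (i1, u) : (Fin 3 × {x : V // x ≠ a}) ⊕ Fin 3) ≠ Sum.inl (i1, w) := by
            intro h
            injection h with h'
            rw [Prod.mk.injEq] at h'
            exact hadjuw.ne (congrArg Subtype.val h'.2)
          rw [hfin1, S11.interA] at hc2
          by_cases hh : i0 = i1
          · rw [if_pos hh, Finset.card_pair huw] at hc2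
            omega
          · rw [if_neg hh, Finset.card_empty] at hc2
            omega
        · have hu2 : u.1 = a3 := by simpa using hu
          have hu2' : u'.1 = a3 := by simpa using hu'
          rw [hfin1, S11.interB a 2 i1 i1' i0 u u' hii1] at hc2 ⊢
          by_cases hh : i0 = i1
          · rw [if_pos hh] at hc2 ⊢
            exact ⟨u, hu2, by rw [hh]⟩
          · rw [if_neg hh] at hc2 ⊢
            by_cases hh' : i0 = i1'
            · rw [if_pos hh'] at hc2 ⊢
              exact ⟨u', hu2', by rw [hh']⟩
            · rw [if_neg hh', Finset.card_empty] at hc2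
              omega
      have hmem2 : Sum.inl (i0, uu) ∈ S11.pFin (p 2) :=
        (Finset.mem_inter.mp (hint2 ▸ Finset.mem_singleton_self _)).1
      refine S11.key A a a1 a2 a3 P hP' i0 (a1, a, a3)
        ⟨hAdj1.ne', hAdj3.ne, h13, hAdj1.symm, hAdj3⟩
        (by simp only [pEdges, Set.mem_insert_iff]; left; exact Sym2.eq_swap) ?_
      intro v
      simp only [pVerts, Set.mem_insert_iff, Set.mem_singleton_iff]
      constructor
      · rintro (rfl | rfl | rfl)
        · refine Or.inr ⟨hAdj1.ne', p 0, hpP 0, hnintp 0 i0, ?_⟩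
          have hxx : (⟨v, hAdj1.ne'⟩ : {x : V // x ≠ a}) = x := Subtype.ext hx1.symm
          rw [hfin0, hxx]
          simp
        · exact Or.inl rfl
        · refine Or.inr ⟨hAdj3.ne', p 2, hpP 2, hnintp 2 i0, ?_⟩
          have huuu : (⟨v, hAdj3.ne'⟩ : {x : V // x ≠ a}) = uu := Subtype.ext huu2.symm
          rw [huuu]
          exact hmem2
      · rintro (rfl | ⟨h, q, hq, hqnint, hqmem⟩)
        · exact Or.inr (Or.inl rfl)
        · obtain ⟨j, rfl⟩ := hqid q hq i0 ⟨v, h⟩ hqmem hqnint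
          have hmi : Sum.inl (i0, (⟨v, h⟩ : {x : V // x ≠ a})) ∈ S11.pFin (p j) ∩ S11.CFin a i0 :=
            Finset.mem_inter.mpr ⟨hqmem, by simp⟩
          rcases hfin3 j with rfl | rfl | rfl
          · rw [hint0] at hmi
            simp only [Finset.mem_singleton, Sum.inl.injEq, Prod.mk.injEq, true_and] at hmi
            exact Or.inl (by rw [← hx1]; exact congrArg Subtype.val hmi)
          · rw [he1] at hmi
            exact absurd hmi (Finset.notMem_empty _)
          · rw [hint2] at hmi
            simp only [Finset.mem_singleton, Sum.inl.injEq, Prod.mk.injEq, true_and] at hmi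
            exact Or.inr (Or.inr (by rw [← huu2]; exact congrArg Subtype.val hmi))
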